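/- arXiv:1203.0501 — 2 statements merged into one kernel-verified Lean document; each statement's English description precedes it below -/
import Mathlib

section
/- Let ξ_1, ..., ξ_N be nonzero complex numbers and σ a permutation of {1, ..., N}. Then Π over pairs (i, j) with i < j and σ(i) > σ(j) of (ξ_{σ(i)}/ξ_{σ(j)}) equals Π_{i=1}^{N} ξ_{σ(i)}^{σ(i) − i}, equivalently Π_{i=1}^N ξ_i^{i − σ^{-1}(i)}. -/
/-! In the product over inversions, `ξ (σ i)` occurs in the numerator once for every later `j`
with `σ j < σ i` and in the denominator once for every earlier `j` with `σ i < σ j`. Splitting the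
`σ i` indices `j` with `σ j < σ i`, and the `i` indices `j < i`, according to the other comparison,
both counts share the part `{j < i, σ j < σ i}`, so the exponent of `ξ (σ i)` is `σ i - i`. -/

open Finset

section

variable {α G : Type*} [Fintype α] [CommGroup G]

lemma prod_filter_rel_fst_eq_prod_pow (r : α → α → Prop) [DecidableRel r] (g : α → G) :
    ∏ p ∈ univ.filter (fun p : α × α => r p.1 p.2), g p.1 = ∏ i, g i ^ #{j | r i j} := by
  rw [prod_filter, Fintype.prod_prod_type]
  simp only [← prod_filter, prod_const]

lemma prod_filter_rel_snd_eq_prod_pow (r : α → α → Prop) [DecidableRel r] (g : α → G) :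
    ∏ p ∈ univ.filter (fun p : α × α => r p.1 p.2), g p.2 = ∏ j, g j ^ #{i | r i j} := by
  rw [prod_filter, Fintype.prod_prod_type_right]
  simp only [← prod_filter, prod_const]

lemma prod_filter_rel_div_eq_prod_zpow (r : α → α → Prop) [DecidableRel r] (g : α → G) :
    ∏ p ∈ univ.filter (fun p : α × α => r p.1 p.2), g p.1 / g p.2 =
      ∏ i, g i ^ ((#{j | r i j} : ℤ) - #{j | r j i}) := by
  rw [prod_div_distrib, prod_filter_rel_fst_eq_prod_pow, prod_filter_rel_snd_eq_prod_pow,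
    ← prod_div_distrib]
  simp only [zpow_sub, zpow_natCast, div_eq_mul_inv]

end

lemma card_filter_perm_lt {N : ℕ} (σ : Equiv.Perm (Fin N)) (k : Fin N) :
    #{j | σ j < k} = k := by
  rw [← Fin.card_Iio k, ← card_map σ.toEmbedding]
  congr 1; ext j; simp

lemma card_inversions_right_sub_left {N : ℕ} (σ : Equiv.Perm (Fin N)) (i : Fin N) :
    (#{j | i < j ∧ σ j < σ i} : ℤ) - #{j | j < i ∧ σ i < σ j} = (σ i : ℤ) - i := by
  have below : #{j | j < i ∧ σ j < σ i} + #{j | i < j ∧ σ j < σ i} = σ i := by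
    rw [← card_union_of_disjoint (disjoint_filter.2 fun j _ h h' => lt_asymm h.1 h'.1),
      ← filter_or, ← card_filter_perm_lt σ (σ i)]
    congr 1; ext j
    simp only [mem_filter, mem_univ, true_and]
    grind [σ.injective.eq_iff]
  have left : #{j | j < i ∧ σ j < σ i} + #{j | j < i ∧ σ i < σ j} = i := by
    rw [← card_union_of_disjoint (disjoint_filter.2 fun j _ h h' => lt_asymm h.2 h'.2),
      ← filter_or, ← Fin.card_Iio i, ← filter_gt_eq_Iio]
    congr 1; ext j
    simp only [mem_filter, mem_univ, true_and]
    grind [σ.injective.eq_iff]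
  omega

lemma prod_inversions_div_eq_prod_zpow {G : Type*} [CommGroup G] {N : ℕ} (σ : Equiv.Perm (Fin N)) (g : Fin N → G) :
    ∏ p ∈ univ.filter (fun p : Fin N × Fin N => p.1 < p.2 ∧ σ p.2 < σ p.1), g p.1 / g p.2 =
      ∏ i, g i ^ ((σ i : ℤ) - i) := by
  rw [prod_filter_rel_div_eq_prod_zpow (fun i j => i < j ∧ σ j < σ i)]
  simp only [card_inversions_right_sub_left]

theorem stmt_10 (N : ℕ) (ξ : Fin N → ℂ) (hξ : ∀ i, ξ i ≠ 0) (σ : Equiv.Perm (Fin N)) :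
    (∏ p ∈ Finset.univ.filter (fun p : Fin N × Fin N => p.1 < p.2 ∧ σ p.2 < σ p.1),
        ξ (σ p.1) / ξ (σ p.2)) =
      ∏ i : Fin N, ξ (σ i) ^ (((σ i : ℕ) : ℤ) - ((i : ℕ) : ℤ)) ∧
    (∏ p ∈ Finset.univ.filter (fun p : Fin N × Fin N => p.1 < p.2 ∧ σ p.2 < σ p.1),
        ξ (σ p.1) / ξ (σ p.2)) =
      ∏ i : Fin N, ξ i ^ (((i : ℕ) : ℤ) - ((σ⁻¹ i : Fin N) : ℤ)) := by
  have h := congrArg (Units.coeHom ℂ)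
    (prod_inversions_div_eq_prod_zpow σ fun i => Units.mk0 (ξ (σ i)) (hξ (σ i)))
  simp only [map_prod, map_div, map_zpow, Units.coeHom_apply, Units.val_mk0] at h
  refine ⟨h, h.trans (Fintype.prod_equiv σ _ _ fun i => ?_)⟩
  simp only [Equiv.Perm.coe_inv, Equiv.symm_apply_apply]
end

section
/- Let λ, μ ∈ ℝ with λ + μ = 1 and 1/2 < μ ≤ 1, and let c = μ/λ if λ ≠ 0 and c = ∞ if λ = 0. Suppose x_2 − x_1 + y_2 − y_1 ≥ 0 and 1 < R_1 < R_2 < c. Then the double contour integral ∮_{|ξ_2|=R_2} ∮_{|ξ_1|=R_1} [(μ + λ ξ_2 ξ_1 − ξ_1)/(μ + λ ξ_2 ξ_1 − ξ_2)] ξ_2^{x_1 − y_2 − 1} ξ_1^{x_2 − y_1 − 1} dξ_1 dξ_2 = 0. -/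
/-!
Write `A = x₂ - y₁ - 1 ≥ B = x₁ - y₂ - 1`. Substituting `ξ₂ = η / ξ₁` and exchanging the order of
integration makes `ξ₁` the inner variable, with `η` fixed on `|η| = R₁ R₂`. The inner integrand
becomes `η ^ B (μ + λη - ξ₁) ξ₁ ^ (A - B) / ((μ + λη) ξ₁ - η)`, whose only pole `η / (μ + λη)` lies
outside `|ξ₁| ≤ R₁` because `|μ + λη| ≤ μ + λ R₁ R₂ < R₂`. By Cauchy's theorem every inner integral
vanishes.
-/

open MeasureTheory Metric Complex

theorem intervalIntegral_integral_swap_of_continuous {E : Type*} [NormedAddCommGroup E]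
    [NormedSpace ℝ E] {f : ℝ → ℝ → E} (hf : Continuous (Function.uncurry f)) {a b c d : ℝ}
    (hab : a ≤ b) (hcd : c ≤ d) :
    ∫ x in a..b, ∫ y in c..d, f x y = ∫ y in c..d, ∫ x in a..b, f x y := by
  simp only [intervalIntegral.integral_of_le hab, intervalIntegral.integral_of_le hcd]
  refine integral_integral_swap ?_
  rw [Measure.prod_restrict, ← Measure.volume_eq_prod]
  exact (hf.continuousOn.integrableOn_compact (isCompact_Icc.prod isCompact_Icc)).mono_set
    (Set.prod_mono Set.Ioc_subset_Icc_self Set.Ioc_subset_Icc_self)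

theorem circleMap_zero_mul_div_circleMap_zero {R₁ : ℝ} (hR₁ : R₁ ≠ 0) (R₂ φ θ : ℝ) :
    circleMap 0 (R₁ * R₂) φ / circleMap 0 R₁ θ = circleMap 0 R₂ (φ - θ) := by
  simp only [circleMap_zero]
  push_cast
  have hR₁' : (R₁ : ℂ) ≠ 0 := by exact_mod_cast hR₁
  rw [sub_mul, Complex.exp_sub]
  field_simp

theorem circleIntegral_circleIntegral_eq_circleIntegral_circleIntegral_div {f : ℂ → ℂ → ℂ}
    {R₁ R₂ : ℝ} (hR₁ : 0 < R₁) (hR₂ : 0 ≤ R₂)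
    (hf : ContinuousOn (Function.uncurry f) (sphere 0 R₁ ×ˢ sphere 0 R₂)) :
    (∮ ξ₂ in C(0, R₂), ∮ ξ₁ in C(0, R₁), f ξ₁ ξ₂) =
      ∮ w in C(0, R₁ * R₂), ∮ z in C(0, R₁), z⁻¹ * f z (w / z) := by
  set G : ℝ → ℝ → ℂ := fun θ₁ θ₂ ↦
    circleMap 0 R₁ θ₁ * I * (circleMap 0 R₂ θ₂ * I * f (circleMap 0 R₁ θ₁) (circleMap 0 R₂ θ₂))
  have hG : Continuous (Function.uncurry G) := by
    have hmaps : Continuous fun p : ℝ × ℝ ↦ (circleMap 0 R₁ p.1, circleMap 0 R₂ p.2) := by fun_prop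
    have hfG := hf.comp_continuous hmaps fun p ↦
      ⟨circleMap_mem_sphere 0 hR₁.le p.1, circleMap_mem_sphere 0 hR₂ p.2⟩
    exact (by fun_prop : Continuous fun p : ℝ × ℝ ↦ circleMap 0 R₁ p.1 * I).mul
      ((by fun_prop : Continuous fun p : ℝ × ℝ ↦ circleMap 0 R₂ p.2 * I).mul hfG)
  -- Fubini, then the periodic shift `θ₂ ↦ φ - θ₁` in the inner integral, then Fubini again.
  have hshift : ∀ θ₁, ∫ θ₂ in 0..2 * Real.pi, G θ₁ θ₂ = ∫ φ in 0..2 * Real.pi, G θ₁ (φ - θ₁) := by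
    intro θ₁
    have hper : Function.Periodic (G θ₁) (2 * Real.pi) := fun θ₂ ↦ by
      simp only [G, periodic_circleMap 0 R₂ θ₂]
    rw [intervalIntegral.integral_comp_sub_right, zero_sub, ← neg_add_eq_sub,
      ← hper.intervalIntegral_add_eq 0 (-θ₁), zero_add]
  calc (∮ ξ₂ in C(0, R₂), ∮ ξ₁ in C(0, R₁), f ξ₁ ξ₂)
      = ∫ θ₂ in 0..2 * Real.pi, ∫ θ₁ in 0..2 * Real.pi, G θ₁ θ₂ := by
        simp only [circleIntegral, deriv_circleMap, smul_eq_mul, G,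
          ← intervalIntegral.integral_const_mul]
        congr 1; ext θ₂; congr 1; ext θ₁; ring
    _ = ∫ φ in 0..2 * Real.pi, ∫ θ₁ in 0..2 * Real.pi, G θ₁ (φ - θ₁) := by
        rw [← intervalIntegral_integral_swap_of_continuous hG Real.two_pi_pos.le Real.two_pi_pos.le]
        simp only [hshift]
        exact intervalIntegral_integral_swap_of_continuous (by fun_prop) Real.two_pi_pos.le
          Real.two_pi_pos.le
    _ = ∮ w in C(0, R₁ * R₂), ∮ z in C(0, R₁), z⁻¹ * f z (w / z) := by
        simp only [circleIntegral, deriv_circleMap, smul_eq_mul, G,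
          ← intervalIntegral.integral_const_mul, circleMap_zero_mul_div_circleMap_zero hR₁.ne']
        congr 1; ext φ; congr 1; ext θ₁
        have hc₁ : circleMap 0 R₁ θ₁ ≠ 0 := circleMap_ne_center hR₁.ne'
        rw [← circleMap_zero_mul_div_circleMap_zero hR₁.ne' R₂ φ θ₁]
        field_simp

theorem circleIntegral_div_linear_eq_zero {g : ℂ → ℂ} (hg : Differentiable ℂ g) {a b : ℂ} {R : ℝ}
    (hR : 0 ≤ R) (hab : ‖a‖ * R < ‖b‖) : ∮ z in C(0, R), g z / (a * z - b) = 0 := by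
  refine DiffContOnCl.circleIntegral_eq_zero hR (DifferentiableOn.diffContOnCl ?_)
  refine (hg.differentiableOn.div (by fun_prop) fun z hz h ↦ ?_).mono closure_ball_subset_closedBall
  have hz' : ‖z‖ ≤ R := by simpa using hz
  have : ‖a * z‖ < ‖b‖ := by
    rw [norm_mul]; exact (mul_le_mul_of_nonneg_left hz' (norm_nonneg a)).trans_lt hab
  rw [sub_eq_zero.mp h] at this
  exact this.false

theorem inv_mul_ratio_mul_zpow_div_eq {a c w z : ℂ} (hz : z ≠ 0) (B : ℤ) (n : ℕ) :
    z⁻¹ * ((a + c * (w / z) * z - z) / (a + c * (w / z) * z - w / z) * (w / z) ^ B * z ^ (B + n)) =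
      w ^ B * (a + c * w - z) * z ^ n / ((a + c * w) * z - w) := by
  have hzB : z ^ B ≠ 0 := zpow_ne_zero B hz
  rw [mul_assoc c, div_mul_cancel₀ w hz, div_zpow, zpow_add₀ hz, zpow_natCast]
  field_simp

theorem add_mul_mul_lt_of_lt_div {lam mu R₁ R₂ : ℝ} (hsum : lam + mu = 1) (hmu : mu ≤ 1)
    (h₁ : 1 < R₁) (h₁₂ : R₁ < R₂) (hc : lam ≠ 0 → R₂ < mu / lam) : mu + lam * R₁ * R₂ < R₂ := by
  rcases (show 0 ≤ lam by linarith).eq_or_lt with rfl | hlam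
  · linarith
  · have hlamR₂ : lam * R₂ < mu := by have := hc hlam.ne'; rwa [lt_div_iff₀ hlam, mul_comm] at this
    nlinarith [mul_pos (sub_pos.2 (h₁.trans h₁₂)) (sub_pos.2 hlamR₂),
      mul_pos (mul_pos hlam (by linarith : (0:ℝ) < R₂)) (sub_pos.2 h₁₂)]

theorem norm_ofReal_add_ofReal_mul_lt {lam mu R₁ R₂ : ℝ} (hlam : 0 ≤ lam) (hmu : 0 ≤ mu)
    (hR : mu + lam * R₁ * R₂ < R₂) {w : ℂ} (hw : ‖w‖ = R₁ * R₂) : ‖(mu : ℂ) + lam * w‖ < R₂ :=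
  calc ‖(mu : ℂ) + lam * w‖ ≤ ‖(mu : ℂ)‖ + ‖(lam : ℂ) * w‖ := norm_add_le _ _
    _ = mu + lam * R₁ * R₂ := by
      rw [norm_mul, hw, Complex.norm_of_nonneg hmu, Complex.norm_of_nonneg hlam, mul_assoc]
    _ < R₂ := hR

theorem ofReal_add_ofReal_mul_mul_sub_ne_zero {lam mu R₁ R₂ : ℝ} (hlam : 0 ≤ lam) (hmu : 0 ≤ mu)
    (hR : mu + lam * R₁ * R₂ < R₂) {ξ₁ ξ₂ : ℂ} (hξ₁ : ‖ξ₁‖ = R₁) (hξ₂ : ‖ξ₂‖ = R₂) :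
    (mu : ℂ) + lam * ξ₂ * ξ₁ - ξ₂ ≠ 0 := by
  intro h
  have := norm_ofReal_add_ofReal_mul_lt hlam hmu hR (w := ξ₂ * ξ₁)
    (by rw [norm_mul, hξ₁, hξ₂, mul_comm])
  rw [← mul_assoc, sub_eq_zero.mp h, hξ₂] at this
  exact this.false

theorem stmt_19 (lam mu : ℝ) (hsum : lam + mu = 1) (hmu1 : 1/2 < mu) (hmu2 : mu ≤ 1)
    (R1 R2 : ℝ) (h1 : 1 < R1) (h12 : R1 < R2) (hc : lam ≠ 0 → R2 < mu / lam)
    (x1 x2 y1 y2 : ℤ) (hx : 0 ≤ x2 - x1 + y2 - y1) :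
    (∮ ξ2 in C(0, R2), ∮ ξ1 in C(0, R1),
        ((mu : ℂ) + (lam : ℂ) * ξ2 * ξ1 - ξ1) / ((mu : ℂ) + (lam : ℂ) * ξ2 * ξ1 - ξ2) *
          ξ2 ^ (x1 - y2 - 1) * ξ1 ^ (x2 - y1 - 1)) = 0 := by
  obtain ⟨n, hn⟩ : ∃ n : ℕ, x2 - y1 - 1 = (x1 - y2 - 1) + n := ⟨(x2 - x1 + y2 - y1).toNat, by omega⟩
  have hR₁ : 0 < R1 := by linarith
  have hlam : 0 ≤ lam := by linarith
  have hmu : 0 ≤ mu := by linarith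
  have hR := add_mul_mul_lt_of_lt_div hsum hmu2 h1 h12 hc
  rw [hn,
    circleIntegral_circleIntegral_eq_circleIntegral_circleIntegral_div hR₁ (by linarith) ?cont]
  case cont =>
    rintro ⟨ξ1, ξ2⟩ ⟨hξ1, hξ2⟩
    rw [mem_sphere_zero_iff_norm] at hξ1 hξ2
    have hξ1' : ξ1 ≠ 0 := norm_ne_zero_iff.mp (by linarith)
    have hξ2' : ξ2 ≠ 0 := norm_ne_zero_iff.mp (by linarith)
    have hden := ofReal_add_ofReal_mul_mul_sub_ne_zero hlam hmu hR hξ1 hξ2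
    exact ContinuousAt.continuousWithinAt (by
      fun_prop (disch := first | exact Or.inl hξ1' | exact Or.inl hξ2' | exact hden))
  refine (circleIntegral.integral_congr (mul_pos hR₁ (by linarith)).le fun w hw ↦ ?_).trans
    (by simp [circleIntegral] : ∮ _ in C(0, R1 * R2), (0 : ℂ) = 0)
  rw [mem_sphere_zero_iff_norm] at hw
  calc (∮ z in C(0, R1), z⁻¹ * _)
      = ∮ z in C(0, R1),
          w ^ (x1 - y2 - 1) * (mu + lam * w - z) * z ^ n / ((mu + lam * w) * z - w) :=
        circleIntegral.integral_congr hR₁.le fun z hz ↦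
          inv_mul_ratio_mul_zpow_div_eq (ne_zero_of_mem_sphere hR₁.ne' ⟨_, hz⟩) _ _
    _ = 0 := by
        refine circleIntegral_div_linear_eq_zero (by fun_prop) hR₁.le ?_
        rw [hw, mul_comm R1]
        exact mul_lt_mul_of_pos_right (norm_ofReal_add_ofReal_mul_lt hlam hmu hR hw) hR₁
end
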